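/- The three-qubit W state |W⟩ = (|001⟩+|010⟩+|100⟩)/√3 satisfies max over single-qubit unit vectors |σ⟩ of |⟨W|σ^{⊗3}⟩|² = 4/9, attained at |σ⟩ = √(2/3)|0⟩ + e^{iφ}√(1/3)|1⟩ for every φ; hence E_G(|W⟩) = log₂(9/4). -/

import Mathlib

open Finset

noncomputable def overlap {n : ℕ} (f g : (Fin n → Fin 2) → ℂ) : ℂ :=
  ∑ x : Fin n → Fin 2, (starRingEnd ℂ) (f x) * g x

noncomputable def symmPow (n : ℕ) (σ : Fin 2 → ℂ) : (Fin n → Fin 2) → ℂ :=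
  fun x => ∏ i, σ (x i)

noncomputable def prodState {n : ℕ} (σ : Fin n → Fin 2 → ℂ) : (Fin n → Fin 2) → ℂ :=
  fun x => ∏ j, σ j (x j)

def qubitUnit (σ : Fin 2 → ℂ) : Prop :=
  norm (σ 0) ^ 2 + norm (σ 1) ^ 2 = 1

noncomputable def dicke (n k : ℕ) : (Fin n → Fin 2) → ℂ :=
  fun x => if (∑ i, ((x i : ℕ))) = k then ((1 / Real.sqrt (n.choose k) : ℝ) : ℂ) else 0

noncomputable def bloch (θ ph : ℝ) : Fin 2 → ℂ :=
  fun i => if i = 0 then ((Real.cos (θ/2) : ℝ) : ℂ)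
           else Complex.exp (Complex.I * ph) * ((Real.sin (θ/2) : ℝ) : ℂ)

def isCPP (n : ℕ) (ψ : (Fin n → Fin 2) → ℂ) (σ : Fin 2 → ℂ) : Prop :=
  qubitUnit σ ∧ ∀ τ, qubitUnit τ →
    norm (overlap (symmPow n τ) ψ) ≤ norm (overlap (symmPow n σ) ψ)

/-!
Since `σ(x₁)⋯σ(xₙ) = σ₀^(n-w) σ₁^w` depends only on the Hamming weight `w` of `x`, and exactly
`C(n,k)` strings have weight `k`, `⟨σ^{⊗n}|D_{n,k}⟩ = √C(n,k) · conj(σ₀^(n-k) σ₁^k)`.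
For `W = D_{3,1}` and `a = |σ₀|²` this gives `|⟨σ^{⊗3}|W⟩|² = 3a²(1-a) = 4/9 - (3a+1)(3a-2)²/9`,
which is maximal exactly when `a = 2/3`, whatever the phase of `σ₁`.
-/

lemma sum_val_eq_card_filter {n : ℕ} (x : Fin n → Fin 2) :
    ∑ i, (x i : ℕ) = #{i | x i = 1} := by
  rw [Finset.card_filter]
  refine Finset.sum_congr rfl fun i _ => ?_
  rcases Fin.exists_fin_two.mp ⟨x i, rfl⟩ with h | h <;> simp [h]

lemma card_filter_sum_val_eq_choose (n k : ℕ) :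
    #{x : Fin n → Fin 2 | ∑ i, (x i : ℕ) = k} = n.choose k := by
  have hC : n.choose k = #(powersetCard k (univ : Finset (Fin n))) := by simp
  rw [hC]
  refine Finset.card_nbij' (fun x => ({i | x i = 1} : Finset (Fin n)))
    (fun s i => if i ∈ s then 1 else 0) ?_ ?_ ?_ ?_
  · intro x hx
    simp_all [sum_val_eq_card_filter]
  · intro s hs
    simp_all [sum_val_eq_card_filter]
  · intro x _
    funext i
    rcases Fin.exists_fin_two.mp ⟨x i, rfl⟩ with h | h <;> simp [h]
  · intro s _
    ext i; by_cases h : i ∈ s <;> simp [h]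

lemma prod_apply_eq_pow_mul_pow_sum (σ : Fin 2 → ℂ) {n : ℕ} (x : Fin n → Fin 2) :
    ∏ i, σ (x i) = σ 0 ^ (n - ∑ i, (x i : ℕ)) * σ 1 ^ ∑ i, (x i : ℕ) := by
  have hx : ∀ i, σ (x i) = σ 0 ^ (1 - (x i : ℕ)) * σ 1 ^ (x i : ℕ) := by
    intro i; rcases Fin.exists_fin_two.mp ⟨x i, rfl⟩ with h | h <;> simp [h]
  have hsum : ∑ i, (1 - (x i : ℕ)) = n - ∑ i, (x i : ℕ) := by
    have : ∑ i, (1 - (x i : ℕ)) + ∑ i, (x i : ℕ) = n := by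
      rw [← Finset.sum_add_distrib]; simp [Nat.sub_add_cancel (Nat.le_of_lt_succ (x _).isLt)]
    omega
  simp_rw [hx, Finset.prod_mul_distrib, Finset.prod_pow_eq_pow_sum, hsum]

theorem overlap_symmPow_dicke (n k : ℕ) (σ : Fin 2 → ℂ) :
    overlap (symmPow n σ) (dicke n k) =
      Real.sqrt (n.choose k) * starRingEnd ℂ (σ 0 ^ (n - k) * σ 1 ^ k) := by
  have hterm : ∀ x : Fin n → Fin 2,
      starRingEnd ℂ (symmPow n σ x) * dicke n k x =
        if ∑ i, (x i : ℕ) = k then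
          starRingEnd ℂ (σ 0 ^ (n - k) * σ 1 ^ k) * ((1 / Real.sqrt (n.choose k) : ℝ) : ℂ)
        else 0 := by
    intro x
    unfold symmPow dicke
    split_ifs with h
    · rw [prod_apply_eq_pow_mul_pow_sum, h]
    · rw [mul_zero]
  rw [overlap, Finset.sum_congr rfl fun x _ => hterm x, ← Finset.sum_filter, Finset.sum_const,
    card_filter_sum_val_eq_choose, nsmul_eq_mul]
  have hsqrt : (n.choose k : ℝ) * (1 / Real.sqrt (n.choose k)) = Real.sqrt (n.choose k) := by
    rw [mul_one_div, Real.div_sqrt]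
  rw [mul_left_comm, ← Complex.ofReal_natCast, ← Complex.ofReal_mul, hsqrt, mul_comm]

theorem norm_sq_overlap_symmPow_dicke (n k : ℕ) (σ : Fin 2 → ℂ) :
    ‖overlap (symmPow n σ) (dicke n k)‖ ^ 2 =
      n.choose k * (‖σ 0‖ ^ 2) ^ (n - k) * (‖σ 1‖ ^ 2) ^ k := by
  rw [overlap_symmPow_dicke, norm_mul, Complex.norm_conj, Complex.norm_real, Real.norm_of_nonneg
    (Real.sqrt_nonneg _), mul_pow, Real.sq_sqrt (Nat.cast_nonneg _), norm_mul, norm_pow, norm_pow]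
  ring

lemma three_mul_sq_mul_one_sub_le {a : ℝ} (ha : -1 / 3 ≤ a) : 3 * a ^ 2 * (1 - a) ≤ 4 / 9 := by
  nlinarith [mul_nonneg (by linarith : 0 ≤ 3 * a + 1) (sq_nonneg (3 * a - 2))]

lemma norm_sq_overlap_symmPow_dicke_three_one (σ : Fin 2 → ℂ) :
    ‖overlap (symmPow 3 σ) (dicke 3 1)‖ ^ 2 = 3 * (‖σ 0‖ ^ 2) ^ 2 * ‖σ 1‖ ^ 2 := by
  simpa using norm_sq_overlap_symmPow_dicke 3 1 σ

theorem norm_sq_overlap_symmPow_dicke_three_one_le {σ : Fin 2 → ℂ} (hσ : qubitUnit σ) :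
    ‖overlap (symmPow 3 σ) (dicke 3 1)‖ ^ 2 ≤ 4 / 9 := by
  have hσ1 : ‖σ 1‖ ^ 2 = 1 - ‖σ 0‖ ^ 2 := by unfold qubitUnit at hσ; linarith
  rw [norm_sq_overlap_symmPow_dicke_three_one, hσ1]
  exact three_mul_sq_mul_one_sub_le (by linarith [sq_nonneg ‖σ 0‖])

noncomputable def wMaximizer (ph : ℝ) : Fin 2 → ℂ :=
  fun i => if i = 0 then ((Real.sqrt (2/3) : ℝ) : ℂ)
           else Complex.exp (Complex.I * ph) * ((Real.sqrt (1/3) : ℝ) : ℂ)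

lemma norm_sq_wMaximizer_zero (ph : ℝ) : ‖wMaximizer ph 0‖ ^ 2 = 2 / 3 := by
  show ‖((Real.sqrt (2 / 3) : ℝ) : ℂ)‖ ^ 2 = 2 / 3
  rw [Complex.norm_real, Real.norm_of_nonneg (Real.sqrt_nonneg _), Real.sq_sqrt (by norm_num)]

lemma norm_sq_wMaximizer_one (ph : ℝ) : ‖wMaximizer ph 1‖ ^ 2 = 1 / 3 := by
  simp [wMaximizer, Complex.norm_exp_I_mul_ofReal, Real.sq_sqrt]

lemma qubitUnit_wMaximizer (ph : ℝ) : qubitUnit (wMaximizer ph) := by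
  rw [qubitUnit, norm_sq_wMaximizer_zero, norm_sq_wMaximizer_one]
  norm_num

lemma norm_sq_overlap_symmPow_wMaximizer (ph : ℝ) :
    ‖overlap (symmPow 3 (wMaximizer ph)) (dicke 3 1)‖ ^ 2 = 4 / 9 := by
  rw [norm_sq_overlap_symmPow_dicke_three_one, norm_sq_wMaximizer_zero, norm_sq_wMaximizer_one]
  norm_num

theorem isGreatest_norm_sq_overlap_symmPow_dicke_three_one :
    IsGreatest {a : ℝ | ∃ σ : Fin 2 → ℂ, qubitUnit σ ∧
      a = ‖overlap (symmPow 3 σ) (dicke 3 1)‖ ^ 2} (4 / 9) :=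
  ⟨⟨wMaximizer 0, qubitUnit_wMaximizer 0, (norm_sq_overlap_symmPow_wMaximizer 0).symm⟩,
    by rintro a ⟨σ, hσ, rfl⟩; exact norm_sq_overlap_symmPow_dicke_three_one_le hσ⟩

theorem w_state_geometric_measure :
    (∀ σ : Fin 2 → ℂ, qubitUnit σ →
      norm (overlap (symmPow 3 σ) (dicke 3 1)) ^ 2 ≤ 4 / 9) ∧
    (∀ ph : ℝ,
      norm (overlap (symmPow 3
        (fun i => if i = 0 then ((Real.sqrt (2/3) : ℝ) : ℂ)
                  else Complex.exp (Complex.I * ph) * ((Real.sqrt (1/3) : ℝ) : ℂ)))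
        (dicke 3 1)) ^ 2 = 4 / 9) ∧
    - Real.logb 2 (sSup {a : ℝ | ∃ σ : Fin 2 → ℂ, qubitUnit σ ∧
        a = norm (overlap (symmPow 3 σ) (dicke 3 1)) ^ 2})
      = Real.logb 2 (9 / 4) := by
  refine ⟨fun σ => norm_sq_overlap_symmPow_dicke_three_one_le,
    norm_sq_overlap_symmPow_wMaximizer, ?_⟩
  rw [isGreatest_norm_sq_overlap_symmPow_dicke_three_one.csSup_eq, ← Real.logb_inv]
  norm_num
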